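/- For an operation f of arity k whose standard rules form a minimal definitional tree T with exempt nodes N1,...,Nn having patterns f t^i_1 ... t^i_k, the replacement rules σi(f x1...xk = t) (for the default rule f x1...xk = t) have left-hand sides that are exhaustive and mutually exclusive over exactly the set of ground f-rooted patterns not matched by any standard rule: every ground f-rooted pattern not matched by a standard rule left-hand side is matched by exactly one replacement rule left-hand side, and no ground pattern matched by a standard rule is matched by a replacement rule. -/

import Mathlib

/-!  A formalization of constructor-based term rewriting with definitional
trees, following Antoy's definitions.  Constructor and operation symbols are
natural numbers (disjoint by construction, since terms distinguish them);
constructors are grouped into types via `ctorType`. -/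

/-- A signature: constructors (with type, arity and argument types) and
operations (with arity, argument types and result type). -/
structure Sig where
  ctorType : ℕ → ℕ
  ctorArity : ℕ → ℕ
  ctorArgTy : ℕ → ℕ → ℕ
  opArity : ℕ → ℕ
  opArgTy : ℕ → ℕ → ℕ
  opResTy : ℕ → ℕ

namespace FLP

/-- Terms: variables (name and type annotation), constructor applications and
operation applications. -/
inductive Tm where
  | var : ℕ → ℕ → Tm
  | con : ℕ → List Tm → Tm
  | op  : ℕ → List Tm → Tm

/-- A substitution maps a variable (name and type) to a term. -/
def Subst := ℕ → ℕ → Tm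

/-- Applying a substitution to a term. -/
def applySubst (σ : Subst) : Tm → Tm
  | .var v ty => σ v ty
  | .con c ts => .con c (ts.attach.map fun t => applySubst σ t.1)
  | .op f ts  => .op f (ts.attach.map fun t => applySubst σ t.1)
decreasing_by
  all_goals (have h := List.sizeOf_lt_of_mem t.2; simp at h ⊢; omega)

/-- The list of variables (name, type) occurring in a term. -/
def varsOf : Tm → List (ℕ × ℕ)
  | .var v ty => [(v, ty)]
  | .con _ ts => ts.attach.flatMap fun t => varsOf t.1
  | .op _ ts  => ts.attach.flatMap fun t => varsOf t.1
decreasing_by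
  all_goals (have h := List.sizeOf_lt_of_mem t.2; simp at h ⊢; omega)

/-- Ground terms: terms without variables. -/
inductive Ground : Tm → Prop
  | con : ∀ c ts, (∀ t ∈ ts, Ground t) → Ground (.con c ts)
  | op  : ∀ f ts, (∀ t ∈ ts, Ground t) → Ground (.op f ts)

/-- Constructor terms: built from variables and constructor symbols only. -/
inductive CTerm : Tm → Prop
  | var : ∀ v ty, CTerm (.var v ty)
  | con : ∀ c ts, (∀ t ∈ ts, CTerm t) → CTerm (.con c ts)

/-- The typing judgment for terms. -/
inductive HasTy (S : Sig) : Tm → ℕ → Prop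
  | var : ∀ v ty, HasTy S (.var v ty) ty
  | con : ∀ c ts, ts.length = S.ctorArity c →
      (∀ i (h : i < ts.length), HasTy S ts[i] (S.ctorArgTy c i)) →
      HasTy S (.con c ts) (S.ctorType c)
  | op : ∀ f ts, ts.length = S.opArity f →
      (∀ i (h : i < ts.length), HasTy S ts[i] (S.opArgTy f i)) →
      HasTy S (.op f ts) (S.opResTy f)

/-- An `f`-rooted pattern: a linear, well-typed term `f t1 ... tn` whose
arguments are constructor terms. -/
def IsPat (S : Sig) (f : ℕ) (p : Tm) : Prop :=
  (∃ ts, p = .op f ts ∧ ∀ t ∈ ts, CTerm t) ∧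
  ((varsOf p).map Prod.fst).Nodup ∧ HasTy S p (S.opResTy f)

/-- A ground `f`-rooted pattern. -/
def IsGroundPat (S : Sig) (f : ℕ) (p : Tm) : Prop :=
  IsPat S f p ∧ Ground p

/-- `q` matches `p` iff `p` is a substitution instance of `q`. -/
def Matches (q p : Tm) : Prop := ∃ σ : Subst, applySubst σ q = p

/-- `q` unifies with `e` iff they have a common instance. -/
def Unifies (q e : Tm) : Prop :=
  ∃ σ τ : Subst, applySubst σ q = applySubst τ e

/-- The substitution replacing the variable named `x` by `t`. -/
def single (x : ℕ) (t : Tm) : Subst := fun v ty =>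
  if v = x then t else .var v ty

/-- The substitution mapping the variables named by `xs` to the corresponding
terms of `ts`. -/
def substOf (xs : List ℕ) (ts : List Tm) : Subst := fun v ty =>
  match xs.findIdx? (· = v) with
  | some i => ts.getD i (.var v ty)
  | none => .var v ty

/-- Partial definitional trees: rule nodes `rule(p = r)`, exempt nodes
`exempt(p)`, and branch nodes storing their pattern, the name of the
inductive variable, and one (constructor, subtree) pair per constructor of
the type of the inductive variable. -/
inductive DTree where
  | rule : Tm → Tm → DTree
  | exempt : Tm → DTree
  | branch : Tm → ℕ → List (ℕ × DTree) → DTree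

/-- The pattern of the root node of a partial definitional tree. -/
def DTree.pat : DTree → Tm
  | .rule p _ => p
  | .exempt p => p
  | .branch p _ _ => p

/-- The patterns of the leaves of a partial definitional tree. -/
def DTree.leafPats : DTree → List Tm
  | .rule p _ => [p]
  | .exempt p => [p]
  | .branch _ _ cs => cs.attach.flatMap fun ct => ct.1.2.leafPats
decreasing_by
  all_goals (obtain ⟨⟨c', T'⟩, hm⟩ := ct;
             have h := List.sizeOf_lt_of_mem hm; simp at h ⊢; omega)

/-- The patterns (left-hand sides) of the rule nodes. -/
def DTree.rulePats : DTree → List Tm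
  | .rule p _ => [p]
  | .exempt _ => []
  | .branch _ _ cs => cs.attach.flatMap fun ct => ct.1.2.rulePats
decreasing_by
  all_goals (obtain ⟨⟨c', T'⟩, hm⟩ := ct;
             have h := List.sizeOf_lt_of_mem hm; simp at h ⊢; omega)

/-- The patterns of the exempt nodes. -/
def DTree.exemptPats : DTree → List Tm
  | .rule _ _ => []
  | .exempt p => [p]
  | .branch _ _ cs => cs.attach.flatMap fun ct => ct.1.2.exemptPats
decreasing_by
  all_goals (obtain ⟨⟨c', T'⟩, hm⟩ := ct;
             have h := List.sizeOf_lt_of_mem hm; simp at h ⊢; omega)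

/-- The rules contained in the rule nodes. -/
def DTree.rules : DTree → List (Tm × Tm)
  | .rule p r => [(p, r)]
  | .exempt _ => []
  | .branch _ _ cs => cs.attach.flatMap fun ct => ct.1.2.rules
decreasing_by
  all_goals (obtain ⟨⟨c', T'⟩, hm⟩ := ct;
             have h := List.sizeOf_lt_of_mem hm; simp at h ⊢; omega)

/-- Well-formed partial definitional trees w.r.t. a signature: at a branch
node with pattern `p` and inductive variable `x` (of type `ty`, occurring in
`p`), there is exactly one child per constructor `c` of type `ty`, whose
pattern is obtained from `p` by substituting `x` with `c` applied to fresh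
pairwise distinct variables. -/
inductive WF (S : Sig) : DTree → Prop
  | rule : ∀ p r, WF S (.rule p r)
  | exempt : ∀ p, WF S (.exempt p)
  | branch : ∀ p x ty (cs : List (ℕ × DTree)),
      (x, ty) ∈ varsOf p →
      (cs.map Prod.fst).Nodup →
      (∀ c, c ∈ cs.map Prod.fst ↔ S.ctorType c = ty) →
      (∀ ct ∈ cs, ∃ fresh : List (ℕ × ℕ),
          (fresh.map Prod.fst).Nodup ∧
          fresh.length = S.ctorArity ct.1 ∧
          (∀ i (h : i < fresh.length), fresh[i].2 = S.ctorArgTy ct.1 i) ∧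
          (∀ v ∈ fresh, v.1 ∉ (varsOf p).map Prod.fst) ∧
          (Prod.snd ct).pat =
            applySubst (single x (.con ct.1 (fresh.map fun v => Tm.var v.1 v.2))) p) →
      (∀ ct ∈ cs, WF S (Prod.snd ct)) →
      WF S (.branch p x cs)

/-- A definitional tree of the operation `f`: a well-formed partial
definitional tree whose root pattern is `f x1 ... xn` with pairwise distinct
(appropriately typed) variables. -/
def IsDTreeOf (S : Sig) (f : ℕ) (T : DTree) : Prop :=
  WF S T ∧
  ∃ xs : List (ℕ × ℕ),
    (xs.map Prod.fst).Nodup ∧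
    xs.length = S.opArity f ∧
    (∀ i (h : i < xs.length), xs[i].2 = S.opArgTy f i) ∧
    T.pat = .op f (xs.map fun v => Tm.var v.1 v.2)

/-- `Subtree N T` : `N` is a node (subtree) of `T`. -/
inductive Subtree : DTree → DTree → Prop
  | refl : ∀ T, Subtree T T
  | branch : ∀ p x cs ct N, ct ∈ cs → Subtree N (Prod.snd ct) →
      Subtree N (.branch p x cs)

/-- A tree has a rule node (somewhere, including its root). -/
inductive HasRule : DTree → Prop
  | rule : ∀ p r, HasRule (.rule p r)
  | branch : ∀ p x cs ct, ct ∈ cs → HasRule (Prod.snd ct) →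
      HasRule (.branch p x cs)

/-- A definitional tree is minimal iff there is some rule node below any
branch node of the tree. -/
def Minimal (T : DTree) : Prop :=
  ∀ p x cs, Subtree (.branch p x cs) T → HasRule (.branch p x cs)

/-! A ground pattern matched by the pattern of a branch node is matched by exactly one child:
the instance of the inductive variable is a ground constructor term, and its root constructor
names the child (the children differ exactly in that constructor). Descending from the root,
whose pattern `f x₁ … xₖ` matches every ground `f`-pattern, therefore reaches exactly one leaf,
which is either a rule node or an exempt node. Since `σᵢ (f x₁ … xₖ)` is just the pattern of
the exempt node `Nᵢ`, the replacement left-hand sides cover exactly the ground patterns that no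
rule covers, each of them once. -/

@[elab_as_elim]
theorem Tm.induction {motive : Tm → Prop}
    (var : ∀ v ty, motive (.var v ty))
    (con : ∀ c ts, (∀ t ∈ ts, motive t) → motive (.con c ts))
    (op : ∀ f ts, (∀ t ∈ ts, motive t) → motive (.op f ts)) :
    ∀ t, motive t
  | .var v ty => var v ty
  | .con c ts => con c ts fun t _ => Tm.induction var con op t
  | .op f ts => op f ts fun t _ => Tm.induction var con op t

@[elab_as_elim]
theorem DTree.induction {motive : DTree → Prop}
    (rule : ∀ p r, motive (.rule p r))
    (exempt : ∀ p, motive (.exempt p))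
    (branch : ∀ p x cs, (∀ ct ∈ cs, motive ct.2) → motive (.branch p x cs)) :
    ∀ T, motive T
  | .rule p r => rule p r
  | .exempt p => exempt p
  | .branch p x cs => branch p x cs fun ct hct =>
      have := List.sizeOf_lt_of_mem hct
      DTree.induction rule exempt branch ct.2
decreasing_by cases ct; simp at this ⊢; omega

-- Substitutions are typed `ℕ → ℕ → Tm` rather than `Subst` from here on: `Subst` is not
-- reducible, so `simp` and `rw` reject an instance of a lemma that applies a `Subst` to arguments.
@[simp] theorem applySubst_var (σ : ℕ → ℕ → Tm) (v ty : ℕ) :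
    applySubst σ (.var v ty) = σ v ty :=
  applySubst.eq_1 σ v ty

@[simp] theorem applySubst_con (σ : ℕ → ℕ → Tm) (c : ℕ) (ts : List Tm) :
    applySubst σ (.con c ts) = .con c (ts.map (applySubst σ)) :=
  (applySubst.eq_2 σ c ts).trans (congrArg _ List.attach_map_val)

@[simp] theorem applySubst_op (σ : ℕ → ℕ → Tm) (f : ℕ) (ts : List Tm) :
    applySubst σ (.op f ts) = .op f (ts.map (applySubst σ)) :=
  (applySubst.eq_3 σ f ts).trans (congrArg _ List.attach_map_val)

@[simp] theorem varsOf_var (v ty : ℕ) : varsOf (.var v ty) = [(v, ty)] := by simp [varsOf]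

@[simp] theorem varsOf_con (c : ℕ) (ts : List Tm) : varsOf (.con c ts) = ts.flatMap varsOf := by
  simp [varsOf]

@[simp] theorem varsOf_op (f : ℕ) (ts : List Tm) : varsOf (.op f ts) = ts.flatMap varsOf := by
  simp [varsOf]

@[simp] theorem DTree.leafPats_rule (p r : Tm) : (DTree.rule p r).leafPats = [p] := by
  simp [DTree.leafPats]

@[simp] theorem DTree.leafPats_exempt (p : Tm) : (DTree.exempt p).leafPats = [p] := by
  simp [DTree.leafPats]

@[simp] theorem DTree.leafPats_branch (p : Tm) (x : ℕ) (cs : List (ℕ × DTree)) :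
    (DTree.branch p x cs).leafPats = cs.flatMap fun ct => ct.2.leafPats := by
  rw [DTree.leafPats, List.flatMap_subtype (g := fun ct => ct.2.leafPats) fun _ _ => rfl,
    List.unattach_attach]

@[simp] theorem DTree.rulePats_rule (p r : Tm) : (DTree.rule p r).rulePats = [p] := by
  simp [DTree.rulePats]

@[simp] theorem DTree.rulePats_exempt (p : Tm) : (DTree.exempt p).rulePats = [] := by
  simp [DTree.rulePats]

@[simp] theorem DTree.rulePats_branch (p : Tm) (x : ℕ) (cs : List (ℕ × DTree)) :
    (DTree.branch p x cs).rulePats = cs.flatMap fun ct => ct.2.rulePats := by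
  rw [DTree.rulePats, List.flatMap_subtype (g := fun ct => ct.2.rulePats) fun _ _ => rfl,
    List.unattach_attach]

@[simp] theorem DTree.exemptPats_rule (p r : Tm) : (DTree.rule p r).exemptPats = [] := by
  simp [DTree.exemptPats]

@[simp] theorem DTree.exemptPats_exempt (p : Tm) : (DTree.exempt p).exemptPats = [p] := by
  simp [DTree.exemptPats]

@[simp] theorem DTree.exemptPats_branch (p : Tm) (x : ℕ) (cs : List (ℕ × DTree)) :
    (DTree.branch p x cs).exemptPats = cs.flatMap fun ct => ct.2.exemptPats := by
  rw [DTree.exemptPats, List.flatMap_subtype (g := fun ct => ct.2.exemptPats) fun _ _ => rfl,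
    List.unattach_attach]

theorem DTree.rulePats_subset_leafPats (T : DTree) : T.rulePats ⊆ T.leafPats := by
  induction T using DTree.induction with
  | rule p r => simp
  | exempt p => simp
  | branch p x cs ih =>
    intro l
    simp only [DTree.rulePats_branch, DTree.leafPats_branch, List.mem_flatMap]
    exact fun ⟨ct, hct, hl⟩ => ⟨ct, hct, ih ct hct hl⟩

theorem DTree.exemptPats_subset_leafPats (T : DTree) : T.exemptPats ⊆ T.leafPats := by
  induction T using DTree.induction with
  | rule p r => simp
  | exempt p => simp
  | branch p x cs ih =>
    intro l
    simp only [DTree.exemptPats_branch, DTree.leafPats_branch, List.mem_flatMap]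
    exact fun ⟨ct, hct, hl⟩ => ⟨ct, hct, ih ct hct hl⟩

theorem applySubst_applySubst (σ τ : ℕ → ℕ → Tm) (q : Tm) :
    applySubst τ (applySubst σ q) = applySubst (fun v ty => applySubst τ (σ v ty)) q := by
  induction q using Tm.induction with
  | var v ty => simp
  | con c ts ih => simpa using List.map_congr_left ih
  | op f ts ih => simpa using List.map_congr_left ih

theorem applySubst_eq_applySubst_iff {σ τ : ℕ → ℕ → Tm} {q : Tm} :
    applySubst σ q = applySubst τ q ↔ ∀ v ∈ varsOf q, σ v.1 v.2 = τ v.1 v.2 := by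
  induction q using Tm.induction with
  | var v ty => simp
  | con c ts ih =>
    simp only [applySubst_con, Tm.con.injEq, true_and, List.map_inj_left, varsOf_con,
      List.mem_flatMap]
    exact ⟨fun h v ⟨t, ht, hv⟩ => (ih t ht).mp (h t ht) v hv,
      fun h t ht => (ih t ht).mpr fun v hv => h v ⟨t, ht, hv⟩⟩
  | op f ts ih =>
    simp only [applySubst_op, Tm.op.injEq, true_and, List.map_inj_left, varsOf_op,
      List.mem_flatMap]
    exact ⟨fun h v ⟨t, ht, hv⟩ => (ih t ht).mp (h t ht) v hv,
      fun h t ht => (ih t ht).mpr fun v hv => h v ⟨t, ht, hv⟩⟩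

theorem applySubst_var_eq (q : Tm) : applySubst Tm.var q = q := by
  induction q using Tm.induction with
  | var v ty => simp
  | con c ts ih => simpa using List.map_congr_left ih
  | op f ts ih => simpa using List.map_congr_left ih

theorem matches_iff {q p : Tm} : Matches q p ↔ ∃ σ : ℕ → ℕ → Tm, applySubst σ q = p := Iff.rfl

theorem Matches.refl (q : Tm) : Matches q q := ⟨Tm.var, applySubst_var_eq q⟩

theorem Matches.trans {q r s : Tm} : Matches q r → Matches r s → Matches q s
  | ⟨σ, hσ⟩, ⟨τ, hτ⟩ =>
    ⟨fun v ty => applySubst τ (σ v ty), (applySubst_applySubst σ τ q).symm.trans (hσ ▸ hτ)⟩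

theorem forall_varsOf_of_applySubst {P : Tm → Prop}
    (hcon : ∀ c ts, P (.con c ts) → ∀ t ∈ ts, P t) (hop : ∀ f ts, P (.op f ts) → ∀ t ∈ ts, P t)
    {σ : ℕ → ℕ → Tm} {q : Tm} (h : P (applySubst σ q)) : ∀ v ∈ varsOf q, P (σ v.1 v.2) := by
  induction q using Tm.induction with
  | var v ty => simpa using h
  | con c ts ih =>
    simp only [varsOf_con, List.mem_flatMap]
    rintro v ⟨t, ht, hv⟩
    exact ih t ht (hcon c _ (applySubst_con σ c ts ▸ h) _ (List.mem_map_of_mem ht)) v hv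
  | op f ts ih =>
    simp only [varsOf_op, List.mem_flatMap]
    rintro v ⟨t, ht, hv⟩
    exact ih t ht (hop f _ (applySubst_op σ f ts ▸ h) _ (List.mem_map_of_mem ht)) v hv

theorem Ground.of_applySubst {σ : ℕ → ℕ → Tm} {q : Tm} (h : Ground (applySubst σ q)) :
    ∀ v ∈ varsOf q, Ground (σ v.1 v.2) :=
  forall_varsOf_of_applySubst (fun _ _ h => by cases h; assumption)
    (fun _ _ h => by cases h; assumption) h

theorem CTerm.of_applySubst {σ : ℕ → ℕ → Tm} {q : Tm} (h : CTerm (applySubst σ q)) :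
    ∀ v ∈ varsOf q, CTerm (σ v.1 v.2) :=
  forall_varsOf_of_applySubst (fun _ _ h => by cases h; assumption) (fun _ _ h => by cases h) h

theorem hasTy_con_iff {S : Sig} {c : ℕ} {ts : List Tm} {τ : ℕ} :
    HasTy S (.con c ts) τ ↔ τ = S.ctorType c ∧ ts.length = S.ctorArity c ∧
      ∀ i (h : i < ts.length), HasTy S ts[i] (S.ctorArgTy c i) :=
  ⟨fun h => by cases h; exact ⟨rfl, ‹_›, ‹_›⟩, fun ⟨hτ, hlen, hts⟩ => hτ ▸ .con c ts hlen hts⟩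

theorem hasTy_op_iff {S : Sig} {f : ℕ} {ts : List Tm} {τ : ℕ} :
    HasTy S (.op f ts) τ ↔ τ = S.opResTy f ∧ ts.length = S.opArity f ∧
      ∀ i (h : i < ts.length), HasTy S ts[i] (S.opArgTy f i) :=
  ⟨fun h => by cases h; exact ⟨rfl, ‹_›, ‹_›⟩, fun ⟨hτ, hlen, hts⟩ => hτ ▸ .op f ts hlen hts⟩

theorem HasTy.of_applySubst {S : Sig} {σ : ℕ → ℕ → Tm} {q : Tm} {τ : ℕ}
    (hq : HasTy S q τ) (h : HasTy S (applySubst σ q) τ) :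
    ∀ v ∈ varsOf q, HasTy S (σ v.1 v.2) v.2 := by
  induction hq with
  | var v ty => simpa using h
  | con c ts _ _ ih =>
    rw [applySubst_con, hasTy_con_iff] at h
    simp only [varsOf_con, List.mem_flatMap]
    rintro v ⟨t, ht, hv⟩
    obtain ⟨i, hi, rfl⟩ := List.getElem_of_mem ht
    have hti := h.2.2 i (by simpa using hi)
    rw [List.getElem_map] at hti
    exact ih i hi hti v hv
  | op f ts _ _ ih =>
    rw [applySubst_op, hasTy_op_iff] at h
    simp only [varsOf_op, List.mem_flatMap]
    rintro v ⟨t, ht, hv⟩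
    obtain ⟨i, hi, rfl⟩ := List.getElem_of_mem ht
    have hti := h.2.2 i (by simpa using hi)
    rw [List.getElem_map] at hti
    exact ih i hi hti v hv

theorem hasTy_applySubst {S : Sig} {σ : ℕ → ℕ → Tm} {q : Tm} {τ : ℕ} (hq : HasTy S q τ)
    (hσ : ∀ v ∈ varsOf q, HasTy S (σ v.1 v.2) v.2) : HasTy S (applySubst σ q) τ := by
  induction hq with
  | var v ty => simpa using hσ
  | con c ts hlen _ ih =>
    rw [applySubst_con]
    refine hasTy_con_iff.mpr ⟨rfl, by simpa using hlen, fun i hi => ?_⟩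
    simp only [List.getElem_map]
    exact ih i (by simpa using hi) fun v hv => hσ v (by simpa using ⟨_, List.getElem_mem _, hv⟩)
  | op f ts hlen _ ih =>
    rw [applySubst_op]
    refine hasTy_op_iff.mpr ⟨rfl, by simpa using hlen, fun i hi => ?_⟩
    simp only [List.getElem_map]
    exact ih i (by simpa using hi) fun v hv => hσ v (by simpa using ⟨_, List.getElem_mem _, hv⟩)

theorem cterm_applySubst {σ : ℕ → ℕ → Tm} {q : Tm} (hq : CTerm q)
    (hσ : ∀ v ∈ varsOf q, CTerm (σ v.1 v.2)) : CTerm (applySubst σ q) := by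
  induction hq with
  | var v ty => simpa using hσ
  | con c ts _ ih =>
    rw [applySubst_con]
    refine .con c _ fun t ht => ?_
    obtain ⟨u, hu, rfl⟩ := List.mem_map.mp ht
    exact ih u hu fun v hv => hσ v (by simpa using ⟨u, hu, hv⟩)

theorem varsOf_applySubst (σ : ℕ → ℕ → Tm) (q : Tm) :
    varsOf (applySubst σ q) = (varsOf q).flatMap fun v => varsOf (σ v.1 v.2) := by
  induction q using Tm.induction with
  | var v ty => simp
  | con c ts ih => simpa [List.flatMap_map, List.flatMap_assoc] using List.flatMap_congr ih
  | op f ts ih => simpa [List.flatMap_map, List.flatMap_assoc] using List.flatMap_congr ih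

theorem map_applySubst_substOf {xs : List (ℕ × ℕ)} (hxs : (xs.map Prod.fst).Nodup)
    {us : List Tm} (hlen : xs.length = us.length) :
    (xs.map fun v => Tm.var v.1 v.2).map (applySubst (substOf (xs.map Prod.fst) us)) = us := by
  refine List.ext_getElem (by simpa using hlen) fun i hi hi' => ?_
  have hidx : (xs.map Prod.fst).findIdx? (· = xs[i].1) = some i := by
    refine List.findIdx?_eq_some_iff_getElem.mpr ⟨by simpa using hi, by simp, fun j hji => ?_⟩
    have hne := (hxs.getElem_inj_iff (hi := by simp; omega) (hj := by simpa using hi)).not.mpr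
      (Nat.ne_of_lt hji)
    simpa only [List.getElem_map, decide_eq_true_eq] using hne
  rw [List.getElem_map, List.getElem_map]
  refine (applySubst_var _ _ _).trans ?_
  simp [substOf, hidx, hi']

theorem single_eq (x : ℕ) (t : Tm) :
    single x t = fun v ty => if v = x then t else .var v ty := rfl

theorem nodup_map_fst_flatMap_replace {L fresh : List (ℕ × ℕ)} {x : ℕ}
    (hL : (L.map Prod.fst).Nodup) (hfresh : (fresh.map Prod.fst).Nodup)
    (hdisj : ∀ v ∈ fresh, v.1 ∉ L.map Prod.fst) :
    ((L.flatMap fun v => if v.1 = x then fresh else [v]).map Prod.fst).Nodup := by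
  rw [List.map_flatMap, List.nodup_flatMap]
  refine ⟨fun v _ => by split_ifs <;> simp [hfresh], ?_⟩
  refine (List.pairwise_map.mp hL).imp_of_mem fun {a b} ha hb hab => ?_
  intro n hna hnb
  dsimp only at hna hnb
  split_ifs at hna hnb with hax hbx hbx
  · exact hab (hax.trans hbx.symm)
  · obtain ⟨w, hw, rfl⟩ := List.mem_map.mp hna
    simp only [List.map_cons, List.map_nil, List.mem_singleton] at hnb
    exact hdisj w hw (hnb ▸ List.mem_map_of_mem hb)
  · obtain ⟨w, hw, rfl⟩ := List.mem_map.mp hnb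
    simp only [List.map_cons, List.map_nil, List.mem_singleton] at hna
    exact hdisj w hw (hna ▸ List.mem_map_of_mem ha)
  · simp only [List.map_cons, List.map_nil, List.mem_singleton] at hna hnb
    exact hab (hna.symm.trans hnb)

theorem IsPat.applySubst_single_con {S : Sig} {f : ℕ} {q : Tm} (hq : IsPat S f q)
    {x ty c : ℕ} (hx : (x, ty) ∈ varsOf q) (hc : S.ctorType c = ty) {fresh : List (ℕ × ℕ)}
    (hfresh : (fresh.map Prod.fst).Nodup) (hlen : fresh.length = S.ctorArity c)
    (hty : ∀ i (h : i < fresh.length), fresh[i].2 = S.ctorArgTy c i)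
    (hdisj : ∀ v ∈ fresh, v.1 ∉ (varsOf q).map Prod.fst) :
    IsPat S f (applySubst (single x (.con c (fresh.map fun v => Tm.var v.1 v.2))) q) := by
  obtain ⟨⟨ts, rfl, hts⟩, hlin, hqty⟩ := hq
  have heq : ∀ v ∈ varsOf (.op f ts), v.1 = x → v = (x, ty) := fun v hv hvx =>
    List.inj_on_of_nodup_map hlin hv hx hvx
  refine ⟨⟨_, applySubst_op _ f ts, fun t ht => ?_⟩, ?_, hasTy_applySubst hqty fun v hv => ?_⟩
  · obtain ⟨u, hu, rfl⟩ := List.mem_map.mp ht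
    refine cterm_applySubst (hts u hu) fun v _ => ?_
    by_cases hvx : v.1 = x
    · simpa [single_eq, hvx] using CTerm.con c _ fun t ht => by
        obtain ⟨w, -, rfl⟩ := List.mem_map.mp ht
        exact .var _ _
    · simpa [single_eq, hvx] using CTerm.var v.1 v.2
  · rw [single_eq, varsOf_applySubst]
    convert nodup_map_fst_flatMap_replace (x := x) hlin hfresh hdisj using 3
    funext v
    split_ifs <;> simp [List.flatMap_map]
  · by_cases hvx : v.1 = x
    · obtain rfl := heq v hv hvx
      simp only [single_eq, if_pos]
      refine hasTy_con_iff.mpr ⟨hc.symm, (List.length_map _).trans hlen, fun i hi => ?_⟩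
      rw [List.getElem_map, ← hty i (by simpa using hi)]
      exact .var _ _
    · simpa [single_eq, hvx] using HasTy.var (S := S) v.1 v.2

theorem eq_of_matches_applySubst_single_con {q p : Tm} {x ty c c' : ℕ} {us us' : List Tm}
    (hx : (x, ty) ∈ varsOf q) (h : Matches (applySubst (single x (.con c us)) q) p)
    (h' : Matches (applySubst (single x (.con c' us')) q) p) : c = c' := by
  obtain ⟨σ, hσ⟩ := matches_iff.mp h
  obtain ⟨σ', hσ'⟩ := matches_iff.mp h'
  rw [single_eq, applySubst_applySubst] at hσ
  rw [single_eq, applySubst_applySubst] at hσ'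
  have hxx := applySubst_eq_applySubst_iff.mp (hσ.trans hσ'.symm) _ hx
  simp only [if_pos, applySubst_con, Tm.con.injEq] at hxx
  exact hxx.1

theorem matches_applySubst_single_con {q : Tm} {θ : ℕ → ℕ → Tm} {x ty c : ℕ} {us : List Tm}
    {fresh : List (ℕ × ℕ)} (hlin : ((varsOf q).map Prod.fst).Nodup) (hx : (x, ty) ∈ varsOf q)
    (hfresh : (fresh.map Prod.fst).Nodup) (hdisj : ∀ v ∈ fresh, v.1 ∉ (varsOf q).map Prod.fst)
    (hlen : fresh.length = us.length) (hθx : θ x ty = .con c us) :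
    Matches (applySubst (single x (.con c (fresh.map fun v => Tm.var v.1 v.2))) q)
      (applySubst θ q) := by
  let θ' : ℕ → ℕ → Tm := fun v ty =>
    if v ∈ fresh.map Prod.fst then substOf (fresh.map Prod.fst) us v ty else θ v ty
  have hθ' : applySubst θ' (.con c (fresh.map fun v => Tm.var v.1 v.2)) = .con c us := by
    conv_rhs => rw [← map_applySubst_substOf hfresh hlen]
    rw [applySubst_con]
    refine congrArg _ (List.map_congr_left fun u hu => ?_)
    obtain ⟨w, hw, rfl⟩ := List.mem_map.mp hu
    rw [applySubst_var]
    exact (if_pos (List.mem_map_of_mem hw)).trans (applySubst_var _ _ _).symm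
  refine ⟨θ', ?_⟩
  rw [single_eq, applySubst_applySubst, applySubst_eq_applySubst_iff]
  intro v hv
  by_cases hvx : v.1 = x
  · obtain rfl : v = (x, ty) := List.inj_on_of_nodup_map hlin hv hx hvx
    simpa using hθ'.trans hθx.symm
  · have hvfresh : v.1 ∉ fresh.map Prod.fst := fun h => by
      obtain ⟨w, hw, hwv⟩ := List.mem_map.mp h
      exact hdisj w hw (hwv ▸ List.mem_map_of_mem hv)
    simp [θ', hvx, hvfresh]

theorem WF.child {S : Sig} {q : Tm} {x : ℕ} {cs : List (ℕ × DTree)}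
    (h : WF S (.branch q x cs)) : ∀ ct ∈ cs, WF S ct.2 := by
  cases h with | branch _ _ _ _ _ _ _ _ hcs => exact hcs

theorem WF.isPat_child {S : Sig} {f : ℕ} {q : Tm} {x : ℕ} {cs : List (ℕ × DTree)}
    (h : WF S (.branch q x cs)) (hq : IsPat S f q) : ∀ ct ∈ cs, IsPat S f ct.2.pat := by
  cases h with | branch _ _ ty _ hx _ hctors hchild _ =>
  intro ct hct
  obtain ⟨fresh, hfresh, hlen, hty, hdisj, hpat⟩ := hchild ct hct
  rw [hpat]
  exact hq.applySubst_single_con hx ((hctors ct.1).mp (List.mem_map_of_mem hct)) hfresh hlen hty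
    hdisj

theorem DTree.matches_of_mem_leafPats {S : Sig} {T : DTree} (hT : WF S T) :
    ∀ l ∈ T.leafPats, Matches T.pat l := by
  induction T using DTree.induction with
  | rule q r => simpa [DTree.pat] using Matches.refl q
  | exempt q => simpa [DTree.pat] using Matches.refl q
  | branch q x cs ih =>
    simp only [DTree.leafPats_branch, List.mem_flatMap]
    rintro l ⟨ct, hct, hl⟩
    cases hT with | branch _ _ _ _ _ _ _ hchild hcs =>
    obtain ⟨_, -, -, -, -, hpat⟩ := hchild ct hct
    exact Matches.trans ⟨_, hpat.symm⟩ (ih ct hct (hcs ct hct) l hl)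

theorem DTree.isPat_of_mem_leafPats {S : Sig} {f : ℕ} {T : DTree} (hwf : WF S T)
    (hT : IsPat S f T.pat) : ∀ l ∈ T.leafPats, IsPat S f l := by
  induction T using DTree.induction with
  | rule q r => simpa [DTree.pat] using hT
  | exempt q => simpa [DTree.pat] using hT
  | branch q x cs ih =>
    simp only [DTree.leafPats_branch, List.mem_flatMap]
    rintro l ⟨ct, hct, hl⟩
    exact ih ct hct (hwf.child ct hct) (hwf.isPat_child hT ct hct) l hl

theorem exists_con_of_applySubst_eq {S : Sig} {f : ℕ} {q p : Tm} {θ : ℕ → ℕ → Tm} {x ty : ℕ}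
    (hq : IsPat S f q) (hp : IsGroundPat S f p) (hθ : applySubst θ q = p)
    (hx : (x, ty) ∈ varsOf q) :
    ∃ c us, θ x ty = .con c us ∧ S.ctorType c = ty ∧ us.length = S.ctorArity c := by
  have hground : Ground (θ x ty) := Ground.of_applySubst (hθ ▸ hp.2) _ hx
  have htype : HasTy S (θ x ty) ty := HasTy.of_applySubst hq.2.2 (hθ ▸ hp.1.2.2) _ hx
  have hcterm : CTerm (θ x ty) := by
    obtain ⟨⟨ts, rfl, -⟩, -, -⟩ := hq
    obtain ⟨⟨ps, rfl, hps⟩, -, -⟩ := hp.1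
    obtain ⟨t, ht, hxt⟩ := List.mem_flatMap.mp ((varsOf_op f ts) ▸ hx)
    rw [applySubst_op, Tm.op.injEq] at hθ
    exact CTerm.of_applySubst (hps _ (hθ.2 ▸ List.mem_map_of_mem ht)) _ hxt
  -- `Ground` rules out a variable and `CTerm` an operation application.
  match θ x ty, hground, hcterm, htype with
  | .con c us, _, _, htype =>
    obtain ⟨hc, hlen, -⟩ := hasTy_con_iff.mp htype
    exact ⟨c, us, rfl, hc.symm, hlen⟩

theorem WF.exists_child_matches {S : Sig} {f : ℕ} {q p : Tm} {x : ℕ} {cs : List (ℕ × DTree)}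
    (h : WF S (.branch q x cs)) (hq : IsPat S f q) (hp : IsGroundPat S f p)
    (hm : Matches q p) :
    ∃ ct ∈ cs, Matches ct.2.pat p ∧ ∀ ct' ∈ cs, ∀ l ∈ ct'.2.leafPats, Matches l p → ct' = ct := by
  have hcs := h.child
  cases h with | branch _ _ ty _ hx hnodup hctors hchild _ =>
  obtain ⟨θ, hθ⟩ := matches_iff.mp hm
  obtain ⟨c, us, hθx, hc, hus⟩ := exists_con_of_applySubst_eq hq hp hθ hx
  obtain ⟨ct, hct, rfl⟩ := List.mem_map.mp ((hctors c).mpr hc)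
  obtain ⟨fresh, hfresh, hlen, -, hdisj, hpat⟩ := hchild ct hct
  have hmct : Matches ct.2.pat p := hpat ▸ hθ ▸
    matches_applySubst_single_con hq.2.1 hx hfresh hdisj (hlen.trans hus.symm) hθx
  refine ⟨ct, hct, hmct, fun ct' hct' l hl hml => ?_⟩
  have hmct' := (DTree.matches_of_mem_leafPats (hcs ct' hct') l hl).trans hml
  obtain ⟨_, -, -, -, -, hpat'⟩ := hchild ct' hct'
  exact List.inj_on_of_nodup_map hnodup hct' hct
    (eq_of_matches_applySubst_single_con hx (hpat' ▸ hmct') (hpat ▸ hmct))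

theorem mem_of_mem_flatMap_of_matches {F : DTree → List Tm} (hF : ∀ T, F T ⊆ T.leafPats)
    {p : Tm} {cs : List (ℕ × DTree)} {ct : ℕ × DTree}
    (huniq : ∀ ct' ∈ cs, ∀ l ∈ ct'.2.leafPats, Matches l p → ct' = ct) :
    ∀ l ∈ cs.flatMap (fun ct => F ct.2), Matches l p → l ∈ F ct.2 := by
  intro l hl hm
  obtain ⟨ct', hct', hl'⟩ := List.mem_flatMap.mp hl
  obtain rfl := huniq ct' hct' l (hF _ hl') hm
  exact hl'

theorem DTree.matches_rulePats_iff_not_matches_exemptPats {S : Sig} {f : ℕ} {T : DTree} {p : Tm}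
    (hwf : WF S T) (hT : IsPat S f T.pat) (hp : IsGroundPat S f p) (hm : Matches T.pat p) :
    (∃ l ∈ T.rulePats, Matches l p) ↔ ¬ ∃ l ∈ T.exemptPats, Matches l p := by
  induction T using DTree.induction with
  | rule q r => simpa [DTree.pat] using hm
  | exempt q => simpa [DTree.pat] using hm
  | branch q x cs ih =>
    obtain ⟨ct, hct, hmct, huniq⟩ := hwf.exists_child_matches hT hp hm
    have hiff (F : DTree → List Tm) (hF : ∀ T, F T ⊆ T.leafPats) :
        (∃ l ∈ cs.flatMap fun ct => F ct.2, Matches l p) ↔ ∃ l ∈ F ct.2, Matches l p :=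
      ⟨fun ⟨l, hl, hml⟩ => ⟨l, mem_of_mem_flatMap_of_matches hF huniq l hl hml, hml⟩,
        fun ⟨l, hl, hml⟩ => ⟨l, List.mem_flatMap.mpr ⟨ct, hct, hl⟩, hml⟩⟩
    rw [DTree.rulePats_branch, DTree.exemptPats_branch, hiff _ DTree.rulePats_subset_leafPats,
      hiff _ DTree.exemptPats_subset_leafPats]
    exact ih ct hct (hwf.child ct hct) (hwf.isPat_child hT ct hct) hmct

theorem DTree.eq_of_mem_exemptPats_of_matches {S : Sig} {f : ℕ} {T : DTree} {p : Tm}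
    (hwf : WF S T) (hT : IsPat S f T.pat) (hp : IsGroundPat S f p) (hm : Matches T.pat p) :
    ∀ l₁ ∈ T.exemptPats, ∀ l₂ ∈ T.exemptPats, Matches l₁ p → Matches l₂ p → l₁ = l₂ := by
  induction T using DTree.induction with
  | rule q r => simp
  | exempt q => simp
  | branch q x cs ih =>
    obtain ⟨ct, hct, hmct, huniq⟩ := hwf.exists_child_matches hT hp hm
    have hmem := mem_of_mem_flatMap_of_matches DTree.exemptPats_subset_leafPats huniq
    simp only [DTree.exemptPats_branch]
    intro l₁ hl₁ l₂ hl₂ hm₁ hm₂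
    exact ih ct hct (hwf.child ct hct) (hwf.isPat_child hT ct hct) hmct
      l₁ (hmem l₁ hl₁ hm₁) l₂ (hmem l₂ hl₂ hm₂) hm₁ hm₂

theorem IsDTreeOf.isPat_pat {S : Sig} {f : ℕ} {T : DTree} (hT : IsDTreeOf S f T) :
    IsPat S f T.pat := by
  obtain ⟨-, xs, hnodup, hlen, hty, hpat⟩ := hT
  rw [hpat]
  refine ⟨⟨_, rfl, fun t ht => ?_⟩, by simpa [List.flatMap_map] using hnodup, ?_⟩
  · obtain ⟨v, -, rfl⟩ := List.mem_map.mp ht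
    exact .var _ _
  · refine hasTy_op_iff.mpr ⟨rfl, (List.length_map _).trans hlen, fun i hi => ?_⟩
    rw [List.getElem_map, ← hty i (by simpa using hi)]
    exact .var _ _

theorem IsPat.length_eq {S : Sig} {f g : ℕ} {us : List Tm} (h : IsPat S f (.op g us)) :
    us.length = S.opArity f := by
  obtain ⟨⟨_, heq, -⟩, -, hty⟩ := h
  obtain ⟨rfl, -⟩ := Tm.op.inj heq
  exact (hasTy_op_iff.mp hty).2.1

theorem IsPat.applySubst_substOf {S : Sig} {f : ℕ} {xs : List (ℕ × ℕ)}
    (h : IsPat S f (.op f (xs.map fun v => Tm.var v.1 v.2))) {us : List Tm}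
    (hus : us.length = S.opArity f) :
    applySubst (substOf (xs.map Prod.fst) us) (.op f (xs.map fun v => Tm.var v.1 v.2)) =
      .op f us :=
  (applySubst_op _ _ _).trans <| congrArg _ <|
    map_applySubst_substOf (by simpa [List.flatMap_map] using h.2.1)
      ((List.length_map _).symm.trans (h.length_eq.trans hus.symm))

theorem replacement_lhs_partition_general (S : Sig) (f : ℕ) (T : DTree)
    (hT : IsDTreeOf S f T)
    (xs : List (ℕ × ℕ))
    (hroot : T.pat = .op f (xs.map fun v => Tm.var v.1 v.2))
    (ReplLhs : Tm → Prop)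
    (hRepl : ∀ l, ReplLhs l ↔ ∃ us, Tm.op f us ∈ T.exemptPats ∧
        l = applySubst (substOf (xs.map Prod.fst) us)
              (Tm.op f (xs.map fun v => Tm.var v.1 v.2))) :
    ∀ p, IsGroundPat S f p →
      ((¬ ∃ l ∈ T.rulePats, Matches l p) ↔ (∃! l, ReplLhs l ∧ Matches l p)) ∧
      ((∃ l ∈ T.rulePats, Matches l p) → ¬ ∃ l, ReplLhs l ∧ Matches l p) := by
  intro p hp
  have hTpat := hT.isPat_pat
  have hroot_pat := hroot ▸ hTpat
  have hexempt_pat : ∀ l ∈ T.exemptPats, IsPat S f l := fun l hl =>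
    DTree.isPat_of_mem_leafPats hT.1 hTpat l (T.exemptPats_subset_leafPats hl)
  have hrepl : ∀ l, ReplLhs l ↔ l ∈ T.exemptPats := fun l => by
    refine (hRepl l).trans ⟨fun ⟨us, hus, hl⟩ => ?_, fun hl => ?_⟩
    · rwa [hl, hroot_pat.applySubst_substOf (hexempt_pat _ hus).length_eq]
    · obtain ⟨⟨us, rfl, -⟩, -, -⟩ := hexempt_pat l hl
      exact ⟨us, hl, (hroot_pat.applySubst_substOf (hexempt_pat _ hl).length_eq).symm⟩
  have hm : Matches T.pat p := by
    obtain ⟨⟨ps, rfl, -⟩, -⟩ := hp.1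
    exact hroot ▸ ⟨_, hroot_pat.applySubst_substOf hp.1.length_eq⟩
  have hrule_iff := T.matches_rulePats_iff_not_matches_exemptPats hT.1 hTpat hp hm
  have huniq := T.eq_of_mem_exemptPats_of_matches hT.1 hTpat hp hm
  simp only [hrepl]
  refine ⟨?_, fun hrule => by simpa using hrule_iff.mp hrule⟩
  rw [hrule_iff, not_not]
  exact ⟨fun ⟨l, hl, hml⟩ => ⟨l, ⟨hl, hml⟩, fun l' ⟨hl', hml'⟩ => huniq l' hl' l hl hml' hml⟩,
    fun ⟨l, hl, _⟩ => ⟨l, hl⟩⟩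

/-- for an operation `f` whose standard rules form a minimal
definitional tree `T` with exempt nodes `N1, ..., Nn`, the left-hand sides of
the replacement rules `σi(f x1...xk = t)` are exhaustive and mutually
exclusive over exactly the ground `f`-rooted patterns not matched by any
standard rule: such a pattern is matched by exactly one replacement left-hand
side, and no ground pattern matched by a standard rule is matched by a
replacement left-hand side. -/
theorem replacement_lhs_partition (S : Sig) (f : ℕ) (T : DTree)
    (hT : IsDTreeOf S f T) (hmin : Minimal T)
    (xs : List (ℕ × ℕ)) (t : Tm)
    (hroot : T.pat = .op f (xs.map fun v => Tm.var v.1 v.2))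
    (ReplLhs : Tm → Prop)
    (hRepl : ∀ l, ReplLhs l ↔ ∃ us, Tm.op f us ∈ T.exemptPats ∧
        l = applySubst (substOf (xs.map Prod.fst) us)
              (Tm.op f (xs.map fun v => Tm.var v.1 v.2))) :
    ∀ p, IsGroundPat S f p →
      ((¬ ∃ l ∈ T.rulePats, Matches l p) ↔ (∃! l, ReplLhs l ∧ Matches l p)) ∧
      ((∃ l ∈ T.rulePats, Matches l p) → ¬ ∃ l, ReplLhs l ∧ Matches l p) :=
  replacement_lhs_partition_general S f T hT xs hroot ReplLhs hRepl

end FLP
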